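/- The endomorphism $\varphi'_\mathbf{i}$ of $\mathbb{Z}^m$ defined by $\varphi'_\mathbf{i}(\varepsilon_\ell)=-\sum_{k=1}^{\ell}(w_k^\vee\alpha_{i_k}^\vee,\ w_\ell\omega_{i_\ell})\,\varepsilon_k$ is a two-sided inverse of $\varphi_\mathbf{i}$, i.e. $\varphi'_\mathbf{i}\circ\varphi_\mathbf{i}=\mathrm{id}_{\mathbb{Z}^m}=\varphi_\mathbf{i}\circ\varphi'_\mathbf{i}$. -/

import Mathlib

open Finset

/-- The weight lattice `𝒫`: the free abelian group with basis `{αᵢ, ωᵢ : i ∈ I}`,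
represented by pairs of coefficient vectors (first component: coefficients of the `αᵢ`,
second component: coefficients of the `ωᵢ`). -/
abbrev PLat (n : ℕ) := (Fin n → ℤ) × (Fin n → ℤ)

/-- The coroot lattice `𝒬^∨`: the free abelian group with basis `{αᵢ^∨ : i ∈ I}`,
represented by coefficient vectors. -/
abbrev QvLat (n : ℕ) := Fin n → ℤ

variable {n : ℕ}

/-- The basis element `α_j^∨` of `𝒬^∨`. -/
def coroot (j : Fin n) : QvLat n := fun k => if k = j then 1 else 0

/-- The basis element `α_j` of `𝒫`. -/
def alP (j : Fin n) : PLat n := (fun k => if k = j then 1 else 0, 0)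

/-- The basis element `ω_j` of `𝒫`. -/
def omP (j : Fin n) : PLat n := (0, fun k => if k = j then 1 else 0)

/-- The biadditive pairing `𝒬^∨ × 𝒫 → ℤ` with `(αᵢ^∨, α_j) = a_{ij}` and
`(αᵢ^∨, ω_j) = δ_{ij}`. -/
def pairQP (A : Fin n → Fin n → ℤ) (x : QvLat n) (lam : PLat n) : ℤ :=
  (∑ a, ∑ b, x a * A a b * lam.1 b) + ∑ a, x a * lam.2 a

/-- The simple reflection `sᵢ` on `𝒫`: `sᵢ α_j = α_j - a_{ij} αᵢ`,
`sᵢ ω_j = ω_j - δ_{ij} αᵢ`. -/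
def sP (A : Fin n → Fin n → ℤ) (a : Fin n) (lam : PLat n) : PLat n :=
  (fun j => if j = a then lam.1 a - ((∑ k, A a k * lam.1 k) + lam.2 a) else lam.1 j,
   lam.2)

/-- The simple reflection `sᵢ^∨` on `𝒬^∨`: `sᵢ^∨ α_j^∨ = α_j^∨ - a_{ji} αᵢ^∨`. -/
def sQ (A : Fin n → Fin n → ℤ) (a : Fin n) (x : QvLat n) : QvLat n :=
  fun j => if j = a then x a - ∑ k, A k a * x k else x j

/-- `w_ℓ = s_{i₁} ∘ ⋯ ∘ s_{i_ℓ}` on `𝒫` (with `w₀ = id`). -/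
def wP (A : Fin n → Fin n → ℤ) (ii : ℕ → Fin n) : ℕ → PLat n → PLat n
  | 0 => id
  | (l+1) => wP A ii l ∘ sP A (ii (l+1))

/-- `w_ℓ^∨ = s_{i₁}^∨ ∘ ⋯ ∘ s_{i_ℓ}^∨` on `𝒬^∨` (with `w₀ = id`). -/
def wQ (A : Fin n → Fin n → ℤ) (ii : ℕ → Fin n) : ℕ → QvLat n → QvLat n
  | 0 => id
  | (l+1) => wQ A ii l ∘ sQ A (ii (l+1))

/-- `k⁺ = min({ℓ : k < ℓ ≤ m, i_ℓ = i_k} ∪ {m+1})`. -/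
noncomputable def kplus (ii : ℕ → Fin n) (m k : ℕ) : ℕ :=
  sInf ({l | k < l ∧ l ≤ m ∧ ii l = ii k} ∪ {m+1})

/-- `k⁻ = max({ℓ : 1 ≤ ℓ < k, i_ℓ = i_k} ∪ {0})`. -/
noncomputable def kminus (ii : ℕ → Fin n) (k : ℕ) : ℕ :=
  sSup ({l | 1 ≤ l ∧ l < k ∧ ii l = ii k} ∪ {0})

/-- The standard basis vector `ε_k` of `ℤ^m` (1-based index), with the convention
`ε_s = 0` for `s ∉ {1,…,m}`. -/
def eps (m k : ℕ) : Fin m → ℤ := fun j => if (j : ℕ) + 1 = k then 1 else 0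

/-- `φ_𝐢(ε_k) = -ε_k - ε_{k⁻} - ∑_{ℓ : ℓ < k < ℓ⁺} a_{i_ℓ i_k} ε_ℓ`. -/
noncomputable def phiE (A : Fin n → Fin n → ℤ) (ii : ℕ → Fin n) (m k : ℕ) :
    Fin m → ℤ :=
  -(eps m k) - eps m (kminus ii k)
    - ∑ l : Fin m, (if (l:ℕ)+1 < k ∧ k < kplus ii m ((l:ℕ)+1)
        then A (ii ((l:ℕ)+1)) (ii k) else 0) • eps m ((l:ℕ)+1)

/-- The endomorphism `φ_𝐢` of `ℤ^m`, extended additively from its values on the basis. -/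
noncomputable def phiMap (A : Fin n → Fin n → ℤ) (ii : ℕ → Fin n) (m : ℕ)
    (v : Fin m → ℤ) : Fin m → ℤ :=
  ∑ k : Fin m, v k • phiE A ii m ((k:ℕ)+1)

/-- `φ'_𝐢(ε_ℓ) = -∑_{k=1}^{ℓ} (w_k^∨ α_{i_k}^∨, w_ℓ ω_{i_ℓ}) ε_k`. -/
def phiE' (A : Fin n → Fin n → ℤ) (ii : ℕ → Fin n) (m l : ℕ) : Fin m → ℤ :=
  -∑ k : Fin m, (if (k:ℕ)+1 ≤ l then
      pairQP A (wQ A ii ((k:ℕ)+1) (coroot (ii ((k:ℕ)+1)))) (wP A ii l (omP (ii l)))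
    else 0) • eps m ((k:ℕ)+1)

/-- The endomorphism `φ'_𝐢` of `ℤ^m`, extended additively from its values on the basis. -/
def phiMap' (A : Fin n → Fin n → ℤ) (ii : ℕ → Fin n) (m : ℕ)
    (v : Fin m → ℤ) : Fin m → ℤ :=
  ∑ l : Fin m, v l • phiE' A ii m ((l:ℕ)+1)

/-- `∂_𝐢 ε_k = ε_k - ε_{k⁻}`. -/
noncomputable def derE (ii : ℕ → Fin n) (m k : ℕ) : Fin m → ℤ :=
  eps m k - eps m (kminus ii k)

/-- The endomorphism `∂_𝐢` of `ℤ^m`. -/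
noncomputable def derMap (ii : ℕ → Fin n) (m : ℕ) (v : Fin m → ℤ) : Fin m → ℤ :=
  ∑ k : Fin m, v k • derE ii m ((k:ℕ)+1)

/-- `∫_𝐢 ε_k = ε_k + ε_{k⁻} + ε_{(k⁻)⁻} + ⋯` (summing along the chain `k > k⁻ > ⋯ > 0`). -/
noncomputable def intE (ii : ℕ → Fin n) (m : ℕ) (k : ℕ) : Fin m → ℤ :=
  if h : kminus ii k < k then eps m k + intE ii m (kminus ii k) else eps m k
termination_by k
decreasing_by exact h

/-- The endomorphism `∫_𝐢` of `ℤ^m`. -/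
noncomputable def intMap (ii : ℕ → Fin n) (m : ℕ) (v : Fin m → ℤ) : Fin m → ℤ :=
  ∑ k : Fin m, v k • intE ii m ((k:ℕ)+1)

/-- The skew-symmetric biadditive form `Λ_𝐢` on `ℤ^m` with
`Λ_𝐢(ε_k, ε_ℓ) = sgn(k-ℓ) c_{i_k i_ℓ}` where `c_{ij} = dᵢ a_{ij}`. -/
def LamF (A : Fin n → Fin n → ℤ) (d : Fin n → ℤ) (ii : ℕ → Fin n) (m : ℕ)
    (a b : Fin m → ℤ) : ℤ :=
  ∑ k : Fin m, ∑ l : Fin m, a k * b l *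
    ((((k:ℕ):ℤ) - ((l:ℕ):ℤ)).sign *
      (d (ii ((k:ℕ)+1)) * A (ii ((k:ℕ)+1)) (ii ((l:ℕ)+1))))

/-- The biadditive form `Φ_𝐢` on `ℤ^m` with `Φ_𝐢(ε_k,ε_ℓ) = -d_{i_k}` if `k = ℓ`,
`= -c_{i_ℓ i_k}` if `ℓ < k`, and `= 0` if `ℓ > k`. -/
def PhiF (A : Fin n → Fin n → ℤ) (d : Fin n → ℤ) (ii : ℕ → Fin n) (m : ℕ)
    (a b : Fin m → ℤ) : ℤ :=
  ∑ k : Fin m, ∑ l : Fin m, a k * b l *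
    (if (k:ℕ) = (l:ℕ) then -(d (ii ((k:ℕ)+1)))
     else if (l:ℕ) < (k:ℕ) then
       -(d (ii ((l:ℕ)+1)) * A (ii ((l:ℕ)+1)) (ii ((k:ℕ)+1)))
     else 0)

/-- The entry `b_{pk}` of the exchange matrix `B̃_𝐢`. -/
noncomputable def bcoef (A : Fin n → Fin n → ℤ) (ii : ℕ → Fin n) (m p k : ℕ) : ℤ :=
  if p = kminus ii k then -1
  else if p < k ∧ k < kplus ii m p ∧ kplus ii m p < kplus ii m k then
    -(A (ii p) (ii k))
  else if k < p ∧ p < kplus ii m k ∧ kplus ii m k < kplus ii m p then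
    A (ii p) (ii k)
  else if p = kplus ii m k then 1
  else 0

/-- The column `𝐛^k = ∑_p b_{pk} ε_p ∈ ℤ^m` of the exchange matrix. -/
noncomputable def bvec (A : Fin n → Fin n → ℤ) (ii : ℕ → Fin n) (m k : ℕ) :
    Fin m → ℤ :=
  fun p => bcoef A ii m ((p:ℕ)+1) k

/-- `ρ_𝐢⁺(ε_k) = ε_k + ∑_{ℓ<k, ℓ⁺=m+1} a_{i_ℓ i_k} ε_ℓ`. -/
noncomputable def rhoPE (A : Fin n → Fin n → ℤ) (ii : ℕ → Fin n) (m k : ℕ) :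
    Fin m → ℤ :=
  eps m k + ∑ l : Fin m, (if (l:ℕ)+1 < k ∧ kplus ii m ((l:ℕ)+1) = m+1
      then A (ii ((l:ℕ)+1)) (ii k) else 0) • eps m ((l:ℕ)+1)

/-- `ρ_𝐢⁻(ε_k) = ε_k - ∑_{ℓ≤k, ℓ⁺=m+1} a_{i_ℓ i_k} ε_ℓ`. -/
noncomputable def rhoME (A : Fin n → Fin n → ℤ) (ii : ℕ → Fin n) (m k : ℕ) :
    Fin m → ℤ :=
  eps m k - ∑ l : Fin m, (if (l:ℕ)+1 ≤ k ∧ kplus ii m ((l:ℕ)+1) = m+1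
      then A (ii ((l:ℕ)+1)) (ii k) else 0) • eps m ((l:ℕ)+1)

/-- The endomorphism `ρ_𝐢⁺` of `ℤ^m`. -/
noncomputable def rhoPMap (A : Fin n → Fin n → ℤ) (ii : ℕ → Fin n) (m : ℕ)
    (v : Fin m → ℤ) : Fin m → ℤ :=
  ∑ k : Fin m, v k • rhoPE A ii m ((k:ℕ)+1)

/-- The endomorphism `ρ_𝐢⁻` of `ℤ^m`. -/
noncomputable def rhoMMap (A : Fin n → Fin n → ℤ) (ii : ℕ → Fin n) (m : ℕ)
    (v : Fin m → ℤ) : Fin m → ℤ :=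
  ∑ k : Fin m, v k • rhoME A ii m ((k:ℕ)+1)

/-- `𝐚_λ = -∑_{k=1}^m (w_k^∨ α_{i_k}^∨, w_m λ) ε_k ∈ ℤ^m`. -/
def avec (A : Fin n → Fin n → ℤ) (ii : ℕ → Fin n) (m : ℕ) (lam : PLat n) :
    Fin m → ℤ :=
  fun k => -(pairQP A (wQ A ii ((k:ℕ)+1) (coroot (ii ((k:ℕ)+1)))) (wP A ii m lam))

/-- `|𝐚| = ∑_{k=1}^m a_k α_{i_k} ∈ 𝒬 ⊆ 𝒫`. -/
def degP (ii : ℕ → Fin n) (m : ℕ) (a : Fin m → ℤ) : PLat n :=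
  (fun j => ∑ k : Fin m, if ii ((k:ℕ)+1) = j then a k else 0, 0)

/-- The pairing `(μ, λ) = ∑ mᵢ dᵢ (αᵢ^∨, λ)` for `μ = ∑ mᵢ αᵢ ∈ 𝒬` and `λ ∈ 𝒫`
(induced by identifying `αᵢ` with `dᵢ αᵢ^∨`). -/
def pairAl (A : Fin n → Fin n → ℤ) (d : Fin n → ℤ) (mu lam : PLat n) : ℤ :=
  ∑ j, mu.1 j * (d j * pairQP A (coroot j) lam)

/-! Write `β_t^∨ = w_t^∨ α_{i_t}^∨`. Because `s_i^∨ α_i^∨ = -α_i^∨`, for `r ≥ j` one has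
`w_r^∨ α_{i_j}^∨ = β_j^∨ + ∑_{j < l ≤ r} a_{i_j i_l} β_l^∨`, and taking `r = j⁺ - 1` gives
`β_j^∨ + β_{j⁺}^∨ + ∑_{j < l < j⁺} a_{i_j i_l} β_l^∨ = 0` whenever `j⁺ ≤ m`.
Pairing these with `w_k ω_{i_k}` and using `(w^∨ x, w λ) = (x, λ)` shows that the matrix of
`φ_𝐢 ∘ φ'_𝐢` is the identity: its `(j, k)` entry is `0` if `j⁺ ≤ k`, and otherwise equals
`(α_{i_j}^∨, ω_{i_k}) = δ_{jk}`, since `i_j ≠ i_k` for `j < k < j⁺`.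
A one-sided inverse of a square integer matrix is two-sided. -/

section Reflections

variable (A : Fin n → Fin n → ℤ)

def pairQPₗ : QvLat n →ₗ[ℤ] PLat n →ₗ[ℤ] ℤ :=
  LinearMap.mk₂ ℤ (pairQP A)
    (fun x y lam => by simp only [pairQP, Pi.add_apply, add_mul, sum_add_distrib]; ring)
    (fun c x lam => by
      simp only [pairQP, Pi.smul_apply, smul_eq_mul, mul_add, mul_sum, mul_assoc])
    (fun x lam mu => by
      simp only [pairQP, Prod.fst_add, Prod.snd_add, Pi.add_apply, mul_add, sum_add_distrib]; ring)
    (fun c x lam => by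
      simp only [pairQP, Prod.smul_fst, Prod.smul_snd, Pi.smul_apply, smul_eq_mul, mul_add, mul_sum]
      congr 1 <;> refine sum_congr rfl fun _ _ => ?_ <;> try refine sum_congr rfl fun _ _ => ?_
      all_goals ring)

@[simp]
lemma pairQPₗ_apply (x : QvLat n) (lam : PLat n) : pairQPₗ A x lam = pairQP A x lam := rfl

lemma pairQP_coroot (a : Fin n) (lam : PLat n) :
    pairQP A (coroot a) lam = (∑ k, A a k * lam.1 k) + lam.2 a := by
  simp [pairQP, coroot]

lemma pairQP_alP (x : QvLat n) (a : Fin n) : pairQP A x (alP a) = ∑ k, x k * A k a := by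
  simp [pairQP, alP]

lemma pairQP_coroot_omP (i j : Fin n) : pairQP A (coroot i) (omP j) = if i = j then 1 else 0 := by
  simp [pairQP, coroot, omP, eq_comm]

lemma sQ_eq (a : Fin n) (x : QvLat n) :
    sQ A a x = x - (∑ k, A k a * x k) • coroot a := by
  funext j
  by_cases h : j = a <;> simp [sQ, coroot, h]

lemma sP_eq (a : Fin n) (lam : PLat n) :
    sP A a lam = lam - pairQP A (coroot a) lam • alP a := by
  ext j
  · by_cases h : j = a <;> simp [sP, alP, pairQP_coroot, h]
  · simp [sP, alP]

lemma pairQP_sQ_sP (hA : ∀ i, A i i = 2) (a : Fin n) (x : QvLat n) (lam : PLat n) :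
    pairQP A (sQ A a x) (sP A a lam) = pairQP A x lam := by
  rw [sQ_eq, sP_eq, ← pairQPₗ_apply]
  simp only [map_sub, map_smul, LinearMap.sub_apply, LinearMap.smul_apply, smul_eq_mul,
    pairQPₗ_apply, pairQP_alP]
  simp [coroot, hA, mul_comm]
  ring

end Reflections

section WeylWords

variable (A : Fin n → Fin n → ℤ) (ii : ℕ → Fin n)

lemma pairQP_wQ_wP (hA : ∀ i, A i i = 2) (t : ℕ) (x : QvLat n) (lam : PLat n) :
    pairQP A (wQ A ii t x) (wP A ii t lam) = pairQP A x lam := by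
  induction t generalizing x lam with
  | zero => rfl
  | succ t ih => simp only [wQ, wP, Function.comp_apply, ih, pairQP_sQ_sP A hA]

lemma sQ_sub_smul (a : Fin n) (c : ℤ) (x y : QvLat n) :
    sQ A a (x - c • y) = sQ A a x - c • sQ A a y := by
  simp only [sQ_eq, Pi.sub_apply, Pi.smul_apply, smul_eq_mul, mul_sub, sum_sub_distrib,
    mul_left_comm _ c, ← mul_sum, sub_smul, smul_sub, mul_smul]
  abel

lemma wQ_sub_smul (t : ℕ) (c : ℤ) (x y : QvLat n) :
    wQ A ii t (x - c • y) = wQ A ii t x - c • wQ A ii t y := by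
  induction t generalizing x y with
  | zero => rfl
  | succ t ih => simp only [wQ, Function.comp_apply, sQ_sub_smul, ih]

lemma sQ_coroot (a i : Fin n) : sQ A a (coroot i) = coroot i - A i a • coroot a := by
  simp [sQ_eq, coroot]

def betaVee (t : ℕ) : QvLat n := wQ A ii t (coroot (ii t))

lemma betaVee_succ (hA : ∀ i, A i i = 2) (t : ℕ) :
    betaVee A ii (t + 1) = -wQ A ii t (coroot (ii (t + 1))) := by
  rw [betaVee, wQ, Function.comp_apply, sQ_coroot, wQ_sub_smul, hA]
  abel

lemma wQ_succ_coroot (hA : ∀ i, A i i = 2) (t : ℕ) (i : Fin n) :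
    wQ A ii (t + 1) (coroot i)
      = wQ A ii t (coroot i) + A i (ii (t + 1)) • betaVee A ii (t + 1) := by
  rw [betaVee_succ A ii hA, wQ, Function.comp_apply, sQ_coroot, wQ_sub_smul, smul_neg]
  abel

lemma wQ_coroot_eq_betaVee_add_sum (hA : ∀ i, A i i = 2) {j r : ℕ} (hjr : j ≤ r) :
    wQ A ii r (coroot (ii j))
      = betaVee A ii j + ∑ l ∈ Ioc j r, A (ii j) (ii l) • betaVee A ii l := by
  induction r, hjr using Nat.le_induction with
  | base => simp [betaVee]
  | succ r hjr ih => rw [wQ_succ_coroot A ii hA, ih, sum_Ioc_succ_top hjr, add_assoc]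

end WeylWords

section Occurrences

variable (ii : ℕ → Fin n) {m : ℕ}

lemma kplus_le (k : ℕ) : kplus ii m k ≤ m + 1 :=
  Nat.sInf_le (Or.inr rfl)

lemma kplus_mem (k : ℕ) :
    kplus ii m k ∈ ({l | k < l ∧ l ≤ m ∧ ii l = ii k} ∪ {m + 1} : Set ℕ) :=
  Nat.sInf_mem ⟨m + 1, Or.inr rfl⟩

lemma lt_kplus {k : ℕ} (hk : k ≤ m) : k < kplus ii m k := by
  rcases kplus_mem ii k with h | h
  · exact h.1
  · rw [Set.mem_singleton_iff.mp h]; omega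

lemma kplus_spec {k : ℕ} (h : kplus ii m k ≤ m) :
    k < kplus ii m k ∧ ii (kplus ii m k) = ii k := by
  rcases kplus_mem ii k with h' | h'
  · exact ⟨h'.1, h'.2.2⟩
  · rw [Set.mem_singleton_iff.mp h'] at h; omega

lemma ii_ne_of_lt_kplus {k r : ℕ} (hkr : k < r) (hr : r < kplus ii m k) : ii r ≠ ii k := by
  intro h
  have : kplus ii m k ≤ r :=
    Nat.sInf_le (Or.inl ⟨hkr, by linarith [kplus_le ii (m := m) k], h⟩)
  omega

lemma kplus_eq_iff {k l : ℕ} (hl : l ≤ m) :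
    kplus ii m k = l ↔ k < l ∧ ii l = ii k ∧ ∀ r, k < r → r < l → ii r ≠ ii k := by
  constructor
  · rintro rfl
    exact ⟨(kplus_spec ii hl).1, (kplus_spec ii hl).2, fun r => ii_ne_of_lt_kplus ii⟩
  · rintro ⟨hkl, hlk, hne⟩
    refine le_antisymm (Nat.sInf_le (Or.inl ⟨hkl, hl, hlk⟩)) (not_lt.mp fun hlt => ?_)
    obtain ⟨hk, hkk⟩ := kplus_spec ii (m := m) (k := k) (by omega)
    exact hne _ hk hlt hkk

lemma kminus_eq_iff {k l : ℕ} (hk : 1 ≤ k) :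
    kminus ii l = k ↔ k < l ∧ ii l = ii k ∧ ∀ r, k < r → r < l → ii r ≠ ii k := by
  have hbdd : BddAbove ({r | 1 ≤ r ∧ r < l ∧ ii r = ii l} ∪ {0} : Set ℕ) :=
    ⟨l, by rintro r (⟨-, hr, -⟩ | hr) <;> simp_all [le_of_lt]⟩
  constructor
  · intro h
    rcases Nat.sSup_mem ⟨0, Or.inr rfl⟩ hbdd with ⟨-, hkl, hlk⟩ | h0
    · rw [kminus] at h
      rw [h] at hkl hlk
      refine ⟨hkl, hlk.symm, fun r hkr hrl hrk => ?_⟩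
      have : r ≤ k := h ▸ le_csSup hbdd (Or.inl ⟨by omega, hrl, hrk.trans hlk⟩)
      omega
    · rw [kminus, Set.mem_singleton_iff.mp h0] at h; omega
  · rintro ⟨hkl, hlk, hne⟩
    refine le_antisymm (csSup_le ⟨0, Or.inr rfl⟩ ?_)
      (le_csSup hbdd (Or.inl ⟨hk, hkl, hlk.symm⟩))
    rintro r (⟨-, hrl, hrk⟩ | hr)
    · exact not_lt.mp fun hkr => hne r hkr hrl (hrk.trans hlk)
    · rw [Set.mem_singleton_iff.mp hr]; omega

lemma kminus_eq_iff_kplus_eq {k l : ℕ} (hk : 1 ≤ k) (hl : l ≤ m) :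
    kminus ii l = k ↔ kplus ii m k = l := by
  rw [kminus_eq_iff ii hk, kplus_eq_iff ii hl]

end Occurrences

section Column

variable (A : Fin n → Fin n → ℤ) (ii : ℕ → Fin n)

def pairCoeff (l k : ℕ) : ℤ := pairQP A (betaVee A ii l) (wP A ii k (omP (ii k)))

lemma pairCoeff_add_sum (hA : ∀ i, A i i = 2) {j r : ℕ} (hjr : j ≤ r) (k : ℕ) :
    pairCoeff A ii j k + ∑ l ∈ Ioc j r, A (ii j) (ii l) * pairCoeff A ii l k
      = pairQP A (wQ A ii r (coroot (ii j))) (wP A ii k (omP (ii k))) := by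
  rw [wQ_coroot_eq_betaVee_add_sum A ii hA hjr, ← pairQPₗ_apply]
  simp only [map_add, map_sum, map_smul, LinearMap.add_apply, LinearMap.coe_sum,
    Finset.sum_apply, LinearMap.smul_apply, smul_eq_mul, pairQPₗ_apply, pairCoeff]

lemma pairCoeff_column_identity (hA : ∀ i, A i i = 2) {m j k : ℕ} (hjk : j ≤ k)
    (hkm : k ≤ m) :
    pairCoeff A ii j k
        + (if kplus ii m j ≤ k then pairCoeff A ii (kplus ii m j) k else 0)
        + ∑ l ∈ Ioc j (min k (kplus ii m j - 1)), A (ii j) (ii l) * pairCoeff A ii l k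
      = if j = k then 1 else 0 := by
  have hj := lt_kplus ii (m := m) (hjk.trans hkm)
  by_cases hnext : kplus ii m j ≤ k
  · obtain ⟨r, hr⟩ : ∃ r, kplus ii m j = r + 1 := ⟨kplus ii m j - 1, by omega⟩
    have hmin : min k (kplus ii m j - 1) = r := by omega
    have hback : wQ A ii r (coroot (ii j)) = -betaVee A ii (kplus ii m j) := by
      rw [← (kplus_spec ii (m := m) (by omega)).2, hr, betaVee_succ A ii hA, neg_neg]
    rw [if_pos hnext, hmin, add_right_comm, pairCoeff_add_sum A ii hA (by omega), hback,
      pairCoeff, ← pairQPₗ_apply, map_neg, LinearMap.neg_apply, pairQPₗ_apply, neg_add_cancel,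
      if_neg (by omega)]
  · have hmin : min k (kplus ii m j - 1) = k := by omega
    rw [if_neg hnext, add_zero, hmin, pairCoeff_add_sum A ii hA hjk, pairQP_wQ_wP A ii hA,
      pairQP_coroot_omP]
    refine if_congr ⟨fun h => ?_, fun h => h ▸ rfl⟩ rfl rfl
    by_contra hne
    exact ii_ne_of_lt_kplus ii (by omega) (not_le.mp hnext) h.symm

lemma sum_Icc_mul_pairCoeff (hA : ∀ i, A i i = 2) {m j k : ℕ} (hj : 1 ≤ j) (hjm : j ≤ m)
    (hkm : k ≤ m) :
    ∑ l ∈ Icc 1 m, ((if j = l then 1 else 0) + (if j = kminus ii l then 1 else 0)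
        + (if j < l ∧ l < kplus ii m j then A (ii j) (ii l) else 0))
        * (if l ≤ k then pairCoeff A ii l k else 0)
      = if j = k then 1 else 0 := by
  have hnext := lt_kplus ii (m := m) hjm
  have hdiag :
      ∑ l ∈ Icc 1 m, (if j = l then 1 else 0) * (if l ≤ k then pairCoeff A ii l k else 0)
      = if j ≤ k then pairCoeff A ii j k else 0 := by
    simp only [boole_mul]
    rw [sum_ite_eq, if_pos (mem_Icc.mpr ⟨hj, hjm⟩)]
  have hprev : ∑ l ∈ Icc 1 m,
        (if j = kminus ii l then 1 else 0) * (if l ≤ k then pairCoeff A ii l k else 0)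
      = if kplus ii m j ≤ k then pairCoeff A ii (kplus ii m j) k else 0 := by
    have hswap : ∀ l ∈ Icc 1 m,
        (if j = kminus ii l then 1 else 0) * (if l ≤ k then pairCoeff A ii l k else 0)
          = if kplus ii m j = l then (if l ≤ k then pairCoeff A ii l k else 0) else 0 :=
      fun l hl => by
        simp only [eq_comm (a := j), kminus_eq_iff_kplus_eq ii hj (mem_Icc.mp hl).2, boole_mul]
    rw [sum_congr rfl hswap, sum_ite_eq]
    by_cases h : kplus ii m j ≤ k
    · rw [if_pos (mem_Icc.mpr ⟨by omega, by omega⟩)]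
    · simp [h]
  have hbetween : ∑ l ∈ Icc 1 m, (if j < l ∧ l < kplus ii m j then A (ii j) (ii l) else 0)
        * (if l ≤ k then pairCoeff A ii l k else 0)
      = ∑ l ∈ Ioc j (min k (kplus ii m j - 1)), A (ii j) (ii l) * pairCoeff A ii l k := by
    simp only [ite_zero_mul_ite_zero]
    rw [← sum_filter]
    congr 1
    ext l
    simp only [mem_filter, mem_Icc, mem_Ioc]
    omega
  rw [sum_congr rfl fun l _ => by rw [add_mul, add_mul], sum_add_distrib, sum_add_distrib,
    hdiag, hprev, hbetween]
  by_cases hjk : j ≤ k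
  · rw [if_pos hjk, pairCoeff_column_identity A ii hA hjk hkm]
  · rw [if_neg hjk, if_neg (by omega), if_neg (by omega), Ioc_eq_empty (by omega)]
    simp

end Column

section Matrices

variable {m : ℕ}

lemma sum_fin_eq_sum_Icc (f : ℕ → ℤ) : ∑ l : Fin m, f (l + 1) = ∑ l ∈ Icc 1 m, f l := by
  rw [Fin.sum_univ_eq_sum_range (fun l => f (l + 1)), range_eq_Ico, sum_Ico_add', zero_add,
    Ico_add_one_right_eq_Icc]

lemma sum_smul_eps_apply (c : Fin m → ℤ) (t : Fin m) :
    (∑ k : Fin m, c k • eps m (k + 1)) t = c t := by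
  simp [eps, Fin.val_inj]

def columnMatrix (E : ℕ → Fin m → ℤ) : Matrix (Fin m) (Fin m) ℤ :=
  Matrix.of fun j k => E (k + 1) j

lemma sum_smul_eq_columnMatrix_mulVec (E : ℕ → Fin m → ℤ) (v : Fin m → ℤ) :
    ∑ k : Fin m, v k • E (k + 1) = (columnMatrix E).mulVec v := by
  ext j
  simp [columnMatrix, Matrix.mulVec, dotProduct, mul_comm]

variable (A : Fin n → Fin n → ℤ) (ii : ℕ → Fin n)

lemma phiE_apply (l : ℕ) (j : Fin m) :
    phiE A ii m l j = -((if (j : ℕ) + 1 = l then 1 else 0)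
      + (if (j : ℕ) + 1 = kminus ii l then 1 else 0)
      + (if (j : ℕ) + 1 < l ∧ l < kplus ii m ((j : ℕ) + 1)
          then A (ii ((j : ℕ) + 1)) (ii l) else 0)) := by
  rw [phiE, Pi.sub_apply, Pi.sub_apply, sum_smul_eps_apply]
  simp only [eps, Pi.neg_apply]
  ring

lemma phiE'_apply (k : ℕ) (t : Fin m) :
    phiE' A ii m k t = -(if (t : ℕ) + 1 ≤ k then pairCoeff A ii ((t : ℕ) + 1) k else 0) := by
  rw [phiE', Pi.neg_apply, sum_smul_eps_apply]
  rfl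

lemma columnMatrix_phiE_mul_phiE' (hA : ∀ i, A i i = 2) :
    columnMatrix (phiE A ii m) * columnMatrix (phiE' A ii m) = 1 := by
  ext j k
  have h := sum_Icc_mul_pairCoeff A ii hA (j := j + 1) (k := k + 1) (by omega) j.isLt k.isLt
  rw [← sum_fin_eq_sum_Icc] at h
  rw [Matrix.mul_apply, Matrix.one_apply,
    ← if_congr (show (j : ℕ) + 1 = k + 1 ↔ j = k by simp [Fin.ext_iff]) rfl rfl, ← h]
  simp only [columnMatrix, Matrix.of_apply, phiE_apply, phiE'_apply, neg_mul_neg]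

end Matrices

theorem phi'_inverse_of_phi_general {n m : ℕ}
    (A : Fin n → Fin n → ℤ)
    (hA : ∀ i, A i i = 2)
    (ii : ℕ → Fin n) :
    (∀ v : Fin m → ℤ, phiMap' A ii m (phiMap A ii m v) = v) ∧
    (∀ v : Fin m → ℤ, phiMap A ii m (phiMap' A ii m v) = v) := by
  have hright := columnMatrix_phiE_mul_phiE' (m := m) A ii hA
  have hleft := mul_eq_one_comm.mp hright
  simp only [phiMap, phiMap', sum_smul_eq_columnMatrix_mulVec, Matrix.mulVec_mulVec, hleft,
    hright, Matrix.one_mulVec, and_self, implies_true]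

/-- `φ'_𝐢` is a two-sided inverse of `φ_𝐢` on `ℤ^m`. -/
theorem phi'_inverse_of_phi {n m : ℕ} (hm : 1 ≤ m)
    (A : Fin n → Fin n → ℤ) (d : Fin n → ℤ)
    (hA : ∀ i, A i i = 2) (hd : ∀ i, 0 < d i)
    (hsym : ∀ i j, d i * A i j = d j * A j i)
    (ii : ℕ → Fin n) :
    (∀ v : Fin m → ℤ, phiMap' A ii m (phiMap A ii m v) = v) ∧
    (∀ v : Fin m → ℤ, phiMap A ii m (phiMap' A ii m v) = v) :=
  phi'_inverse_of_phi_general A hA ii
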